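/- Let F be a field of characteristic 0 and let l*_i = l_i + l_{i,ε}ε ∈ (F[ε]₂)³, i = 0,…,3, with Δ(l_i,l_j,l_k) ≠ 0 for all distinct i, j, k. Then Σ_{i=0}^{3} (−1)^i τ²₀,ε(l*_i | l*₀,…,l̂*_i,…,l*₃) = 0 in (F ⊗_ℤ F^×) ⊕ ⋀²_ℤ F, where τ²₀,ε is evaluated on the configuration projected from l*_i, i.e. all 2×2 determinants Δ(m_a,m_b) are replaced by the 3×3 determinants Δ(l_i,l_a,l_b) and Δ(m*_a,m*_b)_ε by Δ(l*_i,l*_a,l*_b)_ε. In other words, the composite τ²₀,ε ∘ d′ vanishes. -/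
import Mathlib


noncomputable section
open TensorProduct

/-- The 3×3 determinant of the matrix with columns `u, v, w`. -/
def det3 {R : Type*} [CommRing R] (u v w : Fin 3 → R) : R :=
  Matrix.det (Matrix.of fun i j => ![u, v, w] j i)

/-- The ε-part of the dual 3×3 determinant:
`Δ(l*_i,l*_j,l*_k)_ε = Δ(l_{i,ε},l_j,l_k) + Δ(l_i,l_{j,ε},l_k) + Δ(l_i,l_j,l_{k,ε})`. -/
def det3Eps {F : Type*} [CommRing F] (u uε v vε w wε : Fin 3 → F) : F :=
  det3 uε v w + det3 u vε w + det3 u v wε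

open Classical in
/-- `x` as a unit of `F` (junk value `1` if `x = 0`). -/
def toUnit {F : Type*} [Field F] (x : F) : Fˣ := if h : x = 0 then 1 else Units.mk0 x h

/-- The wedge `a ∧ b` of two elements of the additive group `M`, computed in the
exterior algebra `⋀_ℤ M` (in which `⋀²_ℤ M` embeds). -/
def wedge2 {M : Type*} [AddCommGroup M] (a b : M) : ExteriorAlgebra ℤ M :=
  ExteriorAlgebra.ι ℤ a * ExteriorAlgebra.ι ℤ b

/-- The map `τ²₀,ε` on a configuration of three points, given the table `D` of pairwise
determinants and the table `De` of their ε-parts: with `A_{ij} := De i j / D i j`,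
`τ²₀,ε = ( A₁₂ ⊗ (D₀₂/D₀₁) − A₀₂ ⊗ (D₁₂/D₁₀) + A₀₁ ⊗ (D₂₁/D₂₀) ,
           A₀₁ ∧ A₁₂ − A₀₁ ∧ A₀₂ + A₁₂ ∧ A₀₂ )`. -/
def tau20 {F : Type*} [Field F] (D De : Fin 3 → Fin 3 → F) :
    (F ⊗[ℤ] Additive Fˣ) × ExteriorAlgebra ℤ F :=
  ((De 1 2 / D 1 2) ⊗ₜ Additive.ofMul (toUnit (D 0 2 / D 0 1))
    - (De 0 2 / D 0 2) ⊗ₜ Additive.ofMul (toUnit (D 1 2 / D 1 0))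
    + (De 0 1 / D 0 1) ⊗ₜ Additive.ofMul (toUnit (D 2 1 / D 2 0)),
   wedge2 (De 0 1 / D 0 1) (De 1 2 / D 1 2) - wedge2 (De 0 1 / D 0 1) (De 0 2 / D 0 2)
    + wedge2 (De 1 2 / D 1 2) (De 0 2 / D 0 2))

section helpers
variable {F : Type*} [Field F] [CharZero F]

omit [CharZero F] in
lemma toUnit_mul (u v : F) (hu : u ≠ 0) (hv : v ≠ 0) :
    toUnit (u * v) = toUnit u * toUnit v := by
  simp only [toUnit, dif_neg hu, dif_neg hv, dif_neg (mul_ne_zero hu hv)]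
  ext; simp

lemma tmul_ofMul_two_torsion (x : F) (a : Additive Fˣ) (ha : (2:ℤ) • a = 0) :
    x ⊗ₜ[ℤ] a = 0 := by
  have hx : ((2:ℤ) • (x / 2)) = x := by
    simp [zsmul_eq_mul]; ring
  calc x ⊗ₜ[ℤ] a = ((2:ℤ) • (x/2)) ⊗ₜ[ℤ] a := by rw [hx]
    _ = (x/2) ⊗ₜ[ℤ] ((2:ℤ) • a) := by rw [smul_tmul]
    _ = 0 := by rw [ha, tmul_zero]

lemma tmul_toUnit_neg_one (x : F) : x ⊗ₜ[ℤ] Additive.ofMul (toUnit (-1 : F)) = 0 := by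
  apply tmul_ofMul_two_torsion
  have h2 : toUnit (-1 : F) * toUnit (-1 : F) = 1 := by
    have h1 : (-1 : F) ≠ 0 := by norm_num
    simp only [toUnit, dif_neg h1]
    ext; simp
  have h3 : (2:ℤ) • Additive.ofMul (toUnit (-1 : F))
      = Additive.ofMul (toUnit (-1:F) * toUnit (-1:F)) := by
    rw [two_zsmul]; rfl
  rw [h3]; simp_all

lemma tmul_toUnit_neg (x u : F) :
    x ⊗ₜ[ℤ] Additive.ofMul (toUnit (-u)) = x ⊗ₜ[ℤ] Additive.ofMul (toUnit u) := by
  rcases eq_or_ne u 0 with rfl | hu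
  · simp
  · have h1 : (-u) = (-1) * u := by ring
    rw [h1, toUnit_mul _ _ (by norm_num) hu]
    have h2 : Additive.ofMul (toUnit (-1:F) * toUnit u)
        = Additive.ofMul (toUnit (-1:F)) + Additive.ofMul (toUnit u) := rfl
    rw [h2, tmul_add, tmul_toUnit_neg_one, zero_add]

omit [CharZero F] in
lemma tmul_toUnit_div (x u v : F) (hu : u ≠ 0) (hv : v ≠ 0) :
    x ⊗ₜ[ℤ] Additive.ofMul (toUnit (u / v))
      = x ⊗ₜ[ℤ] Additive.ofMul (toUnit u) - x ⊗ₜ[ℤ] Additive.ofMul (toUnit v) := by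
  rw [div_eq_mul_inv u v, toUnit_mul _ _ hu (inv_ne_zero hv)]
  have hinv : toUnit (v⁻¹ : F) = (toUnit v)⁻¹ := by
    simp only [toUnit, dif_neg hv, dif_neg (inv_ne_zero hv)]; ext; simp
  have h2 : Additive.ofMul (toUnit u * toUnit v⁻¹)
      = Additive.ofMul (toUnit u) + Additive.ofMul (toUnit (v⁻¹:F)) := rfl
  rw [h2, tmul_add, hinv]
  have h3 : Additive.ofMul ((toUnit v)⁻¹) = - Additive.ofMul (toUnit v) := rfl
  rw [h3, tmul_neg, sub_eq_add_neg]

lemma wedge2_comm {M : Type*} [AddCommGroup M] (a b : M) : wedge2 a b = -wedge2 b a := by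
  have h := ExteriorAlgebra.ι_sq_zero (R := ℤ) (a + b)
  simp only [map_add, add_mul, mul_add, ExteriorAlgebra.ι_sq_zero, zero_add, add_zero] at h
  have h2 : wedge2 a b + wedge2 b a = 0 := by
    rw [add_comm]; simpa [wedge2] using h
  exact eq_neg_of_add_eq_zero_left h2
end helpers

section dets
variable {R : Type*} [CommRing R]

lemma d_swap12 (u v w : Fin 3 → R) : det3 v u w = -det3 u v w := by
  simp [det3, Matrix.det_fin_three]; ring
lemma d_swap23 (u v w : Fin 3 → R) : det3 u w v = -det3 u v w := by
  simp [det3, Matrix.det_fin_three]; ring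
lemma d_cyc (u v w : Fin 3 → R) : det3 v w u = det3 u v w := by
  simp [det3, Matrix.det_fin_three]; ring
lemma d_cyc2 (u v w : Fin 3 → R) : det3 w u v = det3 u v w := by
  simp [det3, Matrix.det_fin_three]; ring
lemma d_rev (u v w : Fin 3 → R) : det3 w v u = -det3 u v w := by
  simp [det3, Matrix.det_fin_three]; ring

lemma e_swap12 (u ue v ve w we : Fin 3 → R) :
    det3Eps v ve u ue w we = -det3Eps u ue v ve w we := by
  simp only [det3Eps]
  rw [d_swap12 ue v w, d_swap12 u ve w, d_swap12 u v we]; ring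
lemma e_cyc2 (u ue v ve w we : Fin 3 → R) :
    det3Eps w we u ue v ve = det3Eps u ue v ve w we := by
  simp only [det3Eps]
  rw [d_cyc2 ue v w, d_cyc2 u ve w, d_cyc2 u v we]; ring
end dets

/-- **Proposition `zero2`**: the composite
`C₄(𝔸³_{F[ε]₂}) → C₃(𝔸²_{F[ε]₂}) → (F ⊗ F^×) ⊕ ⋀²F` of the projection `d′` with
`τ²₀,ε` is zero: `Σ_{i=0}^{3} (−1)^i τ²₀,ε(l*_i | l*₀,…,l̂*_i,…,l*₃) = 0`, where in the
projected configuration the 2×2 determinants are replaced by 3×3 determinants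
`Δ(l_i,·,·)` (and their ε-parts accordingly). -/
theorem tau20_after_projection_zero (F : Type*) [Field F] [CharZero F]
    (l lε : Fin 4 → Fin 3 → F)
    (h : ∀ i j k : Fin 4, i ≠ j → i ≠ k → j ≠ k → det3 (l i) (l j) (l k) ≠ 0) :
    (∑ i : Fin 4, ((-1 : ℤ) ^ (i : ℕ)) •
        tau20 (fun a b => det3 (l i) (l (i.succAbove a)) (l (i.succAbove b)))
          (fun a b => det3Eps (l i) (lε i) (l (i.succAbove a)) (lε (i.succAbove a))
            (l (i.succAbove b)) (lε (i.succAbove b))))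
      = 0 := by
  have h012 : det3 (l 0) (l 1) (l 2) ≠ 0 := h 0 1 2 (by decide) (by decide) (by decide)
  have h013 : det3 (l 0) (l 1) (l 3) ≠ 0 := h 0 1 3 (by decide) (by decide) (by decide)
  have h023 : det3 (l 0) (l 2) (l 3) ≠ 0 := h 0 2 3 (by decide) (by decide) (by decide)
  have h123 : det3 (l 1) (l 2) (l 3) ≠ 0 := h 1 2 3 (by decide) (by decide) (by decide)
  rw [Fin.sum_univ_four]
  simp only [tau20,
    show (0:Fin 4).succAbove 0 = 1 by decide, show (0:Fin 4).succAbove 1 = 2 by decide,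
    show (0:Fin 4).succAbove 2 = 3 by decide,
    show (1:Fin 4).succAbove 0 = 0 by decide, show (1:Fin 4).succAbove 1 = 2 by decide,
    show (1:Fin 4).succAbove 2 = 3 by decide,
    show (2:Fin 4).succAbove 0 = 0 by decide, show (2:Fin 4).succAbove 1 = 1 by decide,
    show (2:Fin 4).succAbove 2 = 3 by decide,
    show (3:Fin 4).succAbove 0 = 0 by decide, show (3:Fin 4).succAbove 1 = 1 by decide,
    show (3:Fin 4).succAbove 2 = 2 by decide,
    show ((0:Fin 4):ℕ) = 0 from rfl, show ((1:Fin 4):ℕ) = 1 from rfl,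
    show ((2:Fin 4):ℕ) = 2 from rfl, show ((3:Fin 4):ℕ) = 3 from rfl]
  norm_num
  rw [show det3 (l 0) (l 2) (l 1) = -det3 (l 0) (l 1) (l 2) from d_swap23 _ _ _,
    show det3 (l 0) (l 3) (l 2) = -det3 (l 0) (l 2) (l 3) from d_swap23 _ _ _,
    show det3 (l 0) (l 3) (l 1) = -det3 (l 0) (l 1) (l 3) from d_swap23 _ _ _,
    show det3 (l 1) (l 0) (l 2) = -det3 (l 0) (l 1) (l 2) from d_swap12 _ _ _,
    show det3 (l 1) (l 0) (l 3) = -det3 (l 0) (l 1) (l 3) from d_swap12 _ _ _,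
    show det3 (l 1) (l 2) (l 0) = det3 (l 0) (l 1) (l 2) from d_cyc _ _ _,
    show det3 (l 1) (l 3) (l 2) = -det3 (l 1) (l 2) (l 3) from d_swap23 _ _ _,
    show det3 (l 1) (l 3) (l 0) = det3 (l 0) (l 1) (l 3) from d_cyc _ _ _,
    show det3 (l 2) (l 1) (l 3) = -det3 (l 1) (l 2) (l 3) from d_swap12 _ _ _,
    show det3 (l 2) (l 0) (l 3) = -det3 (l 0) (l 2) (l 3) from d_swap12 _ _ _,
    show det3 (l 2) (l 1) (l 0) = -det3 (l 0) (l 1) (l 2) from d_rev _ _ _,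
    show det3 (l 2) (l 3) (l 1) = det3 (l 1) (l 2) (l 3) from d_cyc _ _ _,
    show det3 (l 2) (l 3) (l 0) = det3 (l 0) (l 2) (l 3) from d_cyc _ _ _,
    show det3 (l 2) (l 0) (l 1) = det3 (l 0) (l 1) (l 2) from d_cyc2 _ _ _,
    show det3 (l 3) (l 1) (l 2) = det3 (l 1) (l 2) (l 3) from d_cyc2 _ _ _,
    show det3 (l 3) (l 0) (l 2) = det3 (l 0) (l 2) (l 3) from d_cyc2 _ _ _,
    show det3 (l 3) (l 0) (l 1) = det3 (l 0) (l 1) (l 3) from d_cyc2 _ _ _,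
    show det3 (l 3) (l 1) (l 0) = -det3 (l 0) (l 1) (l 3) from d_rev _ _ _,
    show det3 (l 3) (l 2) (l 1) = -det3 (l 1) (l 2) (l 3) from d_rev _ _ _,
    show det3 (l 3) (l 2) (l 0) = -det3 (l 0) (l 2) (l 3) from d_rev _ _ _,
    show det3Eps (l 1) (lε 1) (l 0) (lε 0) (l 2) (lε 2)
      = -det3Eps (l 0) (lε 0) (l 1) (lε 1) (l 2) (lε 2) from e_swap12 _ _ _ _ _ _,
    show det3Eps (l 1) (lε 1) (l 0) (lε 0) (l 3) (lε 3)
      = -det3Eps (l 0) (lε 0) (l 1) (lε 1) (l 3) (lε 3) from e_swap12 _ _ _ _ _ _,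
    show det3Eps (l 2) (lε 2) (l 1) (lε 1) (l 3) (lε 3)
      = -det3Eps (l 1) (lε 1) (l 2) (lε 2) (l 3) (lε 3) from e_swap12 _ _ _ _ _ _,
    show det3Eps (l 2) (lε 2) (l 0) (lε 0) (l 3) (lε 3)
      = -det3Eps (l 0) (lε 0) (l 2) (lε 2) (l 3) (lε 3) from e_swap12 _ _ _ _ _ _,
    show det3Eps (l 2) (lε 2) (l 0) (lε 0) (l 1) (lε 1)
      = det3Eps (l 0) (lε 0) (l 1) (lε 1) (l 2) (lε 2) from e_cyc2 _ _ _ _ _ _,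
    show det3Eps (l 3) (lε 3) (l 1) (lε 1) (l 2) (lε 2)
      = det3Eps (l 1) (lε 1) (l 2) (lε 2) (l 3) (lε 3) from e_cyc2 _ _ _ _ _ _,
    show det3Eps (l 3) (lε 3) (l 0) (lε 0) (l 2) (lε 2)
      = det3Eps (l 0) (lε 0) (l 2) (lε 2) (l 3) (lε 3) from e_cyc2 _ _ _ _ _ _,
    show det3Eps (l 3) (lε 3) (l 0) (lε 0) (l 1) (lε 1)
      = det3Eps (l 0) (lε 0) (l 1) (lε 1) (l 3) (lε 3) from e_cyc2 _ _ _ _ _ _]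
  simp only [neg_div_neg_eq, div_neg, neg_div, neg_neg, tmul_toUnit_neg]
  constructor
  · simp only [tmul_toUnit_div _ _ _ h013 h012, tmul_toUnit_div _ _ _ h023 h012,
      tmul_toUnit_div _ _ _ h023 h013, tmul_toUnit_div _ _ _ h123 h013,
      tmul_toUnit_div _ _ _ h123 h012, tmul_toUnit_div _ _ _ h123 h023]
    abel
  · rw [show wedge2 (det3Eps (l 0) (lε 0) (l 2) (lε 2) (l 3) (lε 3) / det3 (l 0) (l 2) (l 3))
          (det3Eps (l 0) (lε 0) (l 1) (lε 1) (l 3) (lε 3) / det3 (l 0) (l 1) (l 3))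
        = -wedge2 (det3Eps (l 0) (lε 0) (l 1) (lε 1) (l 3) (lε 3) / det3 (l 0) (l 1) (l 3))
          (det3Eps (l 0) (lε 0) (l 2) (lε 2) (l 3) (lε 3) / det3 (l 0) (l 2) (l 3))
        from wedge2_comm _ _,
      show wedge2 (det3Eps (l 1) (lε 1) (l 2) (lε 2) (l 3) (lε 3) / det3 (l 1) (l 2) (l 3))
          (det3Eps (l 0) (lε 0) (l 1) (lε 1) (l 3) (lε 3) / det3 (l 0) (l 1) (l 3))
        = -wedge2 (det3Eps (l 0) (lε 0) (l 1) (lε 1) (l 3) (lε 3) / det3 (l 0) (l 1) (l 3))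
          (det3Eps (l 1) (lε 1) (l 2) (lε 2) (l 3) (lε 3) / det3 (l 1) (l 2) (l 3))
        from wedge2_comm _ _,
      show wedge2 (det3Eps (l 1) (lε 1) (l 2) (lε 2) (l 3) (lε 3) / det3 (l 1) (l 2) (l 3))
          (det3Eps (l 0) (lε 0) (l 2) (lε 2) (l 3) (lε 3) / det3 (l 0) (l 2) (l 3))
        = -wedge2 (det3Eps (l 0) (lε 0) (l 2) (lε 2) (l 3) (lε 3) / det3 (l 0) (l 2) (l 3))
          (det3Eps (l 1) (lε 1) (l 2) (lε 2) (l 3) (lε 3) / det3 (l 1) (l 2) (l 3))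
        from wedge2_comm _ _]
    abel

end
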